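/- arXiv:0803.1276 — 6 statements merged into one kernel-verified Lean document; each statement's English description precedes it below -/
import Mathlib

section
/- If γ is not a nonpositive integer and γ - α - β > 0, then the limit of F(α,β;γ;z) as z → 1⁻ equals Γ(γ)Γ(γ-α-β) / (Γ(γ-α)Γ(γ-β)). -/
/-!
Gauss's classical argument. The coefficients `c_n` of `F(α, β; γ; z)` are `O(n^(α+β-γ-1))` by
Euler's limit formula for `Γ`, so for `γ - α - β > 0` the series converges absolutely at `z = 1`
and Abel's theorem reduces the claim to the value `S(γ) = F(α, β; γ; 1)`. Telescoping the series
gives the contiguous relation `γ (γ - α - β) S(γ) = (γ - α) (γ - β) S(γ + 1)`; iterating it `m`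
times expresses `S(γ)` as `S(γ + m)` times a ratio of Pochhammer symbols. As `m → ∞`, `S(γ + m) → 1`
by dominated convergence, and the Pochhammer ratio tends to the Gamma ratio, again by Euler's
formula.
-/

open Real Filter Topology Asymptotics
open scoped Nat

/-- The Gauss hypergeometric function `F(α, β; γ; z)`, defined by its power series. -/
noncomputable def hypF (α β γ z : ℝ) : ℝ :=
  ∑' i : ℕ, ((ascPochhammer ℝ i).eval α * (ascPochhammer ℝ i).eval β /
      (ascPochhammer ℝ i).eval γ) * z ^ i / (Nat.factorial i)

theorem ascPochhammer_eval_eq_prod_range {R : Type*} [CommSemiring R] (n : ℕ) (r : R) :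
    (ascPochhammer R n).eval r = ∏ j ∈ Finset.range n, (r + j) := by
  induction n with
  | zero => simp
  | succ n ih => rw [ascPochhammer_succ_eval, Finset.prod_range_succ, ih]

theorem ascPochhammer_eval_le_of_le {x y : ℝ} (hx : 0 ≤ x) (hxy : x ≤ y) (n : ℕ) :
    (ascPochhammer ℝ n).eval x ≤ (ascPochhammer ℝ n).eval y := by
  simp only [ascPochhammer_eval_eq_prod_range]
  exact Finset.prod_le_prod (fun j _ => by positivity) fun j _ => by linarith

theorem ascPochhammer_eval_ne_zero {x : ℝ} (hx : ∀ m : ℕ, x ≠ -m) (n : ℕ) :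
    (ascPochhammer ℝ n).eval x ≠ 0 := by
  rw [Ne, ascPochhammer_eval_eq_zero_iff]
  rintro ⟨k, -, hk⟩
  exact hx k (by linarith)

theorem tendsto_ascPochhammer_eval_atTop {n : ℕ} (hn : n ≠ 0) :
    Tendsto (fun x : ℝ => (ascPochhammer ℝ n).eval x) atTop atTop := by
  refine Polynomial.tendsto_atTop_of_leadingCoeff_nonneg _ ?_ ?_
  · rw [Polynomial.degree_eq_natDegree (monic_ascPochhammer ℝ n).ne_zero, ascPochhammer_natDegree]
    exact_mod_cast Nat.pos_of_ne_zero hn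
  · rw [(monic_ascPochhammer ℝ n).leadingCoeff]
    exact zero_le_one

theorem Real.GammaSeq_eq_div_ascPochhammer (s : ℝ) (n : ℕ) :
    GammaSeq s n = (n : ℝ) ^ s * n ! / (ascPochhammer ℝ (n + 1)).eval s := by
  rw [GammaSeq, ascPochhammer_eval_eq_prod_range]

-- If `a` or `b` is a nonpositive integer, the sequence is eventually `0`, and so is the limit
-- because `Γ` vanishes there and `x / 0 = 0`.
theorem tendsto_rpow_mul_ascPochhammer_div (a b c d : ℝ) :
    Tendsto (fun n : ℕ => (n : ℝ) ^ (c + d - a - b) *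
      ((ascPochhammer ℝ (n + 1)).eval a * (ascPochhammer ℝ (n + 1)).eval b /
        ((ascPochhammer ℝ (n + 1)).eval c * (ascPochhammer ℝ (n + 1)).eval d)))
      atTop (𝓝 (Gamma c * Gamma d / (Gamma a * Gamma b))) := by
  by_cases hab : Gamma a * Gamma b = 0
  · rw [hab, div_zero]
    obtain ⟨k, hk⟩ : ∃ k : ℕ, a = -k ∨ b = -k := by
      rcases mul_eq_zero.1 hab with h | h <;> obtain ⟨k, rfl⟩ := (Gamma_eq_zero_iff _).1 h
      exacts [⟨k, .inl rfl⟩, ⟨k, .inr rfl⟩]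
    refine tendsto_const_nhds.congr' ?_
    filter_upwards [eventually_ge_atTop k] with n hn
    rcases hk with rfl | rfl <;>
      simp [ascPochhammer_eval_neg_coe_nat_of_lt (Nat.lt_succ_of_le hn)]
  · refine (((GammaSeq_tendsto_Gamma c).mul (GammaSeq_tendsto_Gamma d)).div
      ((GammaSeq_tendsto_Gamma a).mul (GammaSeq_tendsto_Gamma b)) hab).congr' ?_
    filter_upwards [eventually_gt_atTop 0] with n hn
    have hn' : (0 : ℝ) < n := Nat.cast_pos.2 hn
    have hfac : (n ! : ℝ) ≠ 0 := by positivity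
    simp only [Pi.div_apply, GammaSeq_eq_div_ascPochhammer, rpow_sub hn',
      rpow_add hn', div_eq_mul_inv, mul_inv, inv_inv]
    field_simp

theorem tsum_sub_succ_of_tendsto {G : Type*} [AddCommGroup G] [TopologicalSpace G]
    [IsTopologicalAddGroup G] [T2Space G] {u : ℕ → G} {l : G}
    (hs : Summable fun n => u n - u (n + 1)) (hu : Tendsto u atTop (𝓝 l)) :
    ∑' n, (u n - u (n + 1)) = u 0 - l := by
  refine tendsto_nhds_unique hs.hasSum.tendsto_sum_nat ?_
  simp only [Finset.sum_range_sub']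
  exact tendsto_const_nhds.sub hu

noncomputable def hypCoeff (α β γ : ℝ) (n : ℕ) : ℝ :=
  (ascPochhammer ℝ n).eval α * (ascPochhammer ℝ n).eval β / (ascPochhammer ℝ n).eval γ / n !

theorem hypF_eq_tsum (α β γ z : ℝ) : hypF α β γ z = ∑' n, hypCoeff α β γ n * z ^ n := by
  simp only [hypF, hypCoeff, div_mul_eq_mul_div]

theorem hypF_one (α β γ : ℝ) : hypF α β γ 1 = ∑' n, hypCoeff α β γ n := by
  simp [hypF_eq_tsum]

@[simp]
theorem hypCoeff_zero (α β γ : ℝ) : hypCoeff α β γ 0 = 1 := by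
  simp [hypCoeff]

theorem hypCoeff_succ_isBigO (α β γ : ℝ) :
    (fun n : ℕ => hypCoeff α β γ (n + 1)) =O[atTop] fun n : ℕ => (n : ℝ) ^ (α + β - γ - 1) := by
  have hlim := tendsto_rpow_mul_ascPochhammer_div α β γ 1
  refine ((isBigO_refl (fun n : ℕ => (n : ℝ) ^ (α + β - γ - 1)) atTop).mul
    (hlim.isBigO_one (F := ℝ))).congr' ?_ (.of_forall fun n => mul_one _)
  filter_upwards [eventually_gt_atTop 0] with n hn
  have hn' : (0 : ℝ) < n := Nat.cast_pos.2 hn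
  rw [← mul_assoc, ← rpow_add hn', show α + β - γ - 1 + (γ + 1 - α - β) = 0 by ring, rpow_zero,
    one_mul, ascPochhammer_eval_one, hypCoeff, div_div]

theorem summable_hypCoeff {α β γ : ℝ} (h : 0 < γ - α - β) : Summable (hypCoeff α β γ) := by
  rw [← summable_nat_add_iff 1]
  exact summable_of_isBigO_nat (summable_nat_rpow.2 (by linarith)) (hypCoeff_succ_isBigO α β γ)

theorem tendsto_natCast_mul_hypCoeff {α β γ : ℝ} (h : 0 < γ - α - β) :
    Tendsto (fun n : ℕ => n * hypCoeff α β γ n) atTop (𝓝 0) := by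
  rw [← tendsto_add_atTop_iff_nat 1]
  refine (((isBigO_refl (fun n : ℕ => ((n + 1 : ℕ) : ℝ)) atTop).mul
    (hypCoeff_succ_isBigO α β γ))).trans_tendsto ?_
  have hpow : ∀ s : ℝ, s < 0 → Tendsto (fun n : ℕ => (n : ℝ) ^ s) atTop (𝓝 0) := fun s hs => by
    have := (tendsto_rpow_neg_atTop (neg_pos.2 hs)).comp tendsto_natCast_atTop_atTop
    rwa [neg_neg] at this
  have hsum := (hpow (α + β - γ) (by linarith)).add (hpow (α + β - γ - 1) (by linarith))
  rw [add_zero] at hsum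
  refine hsum.congr' ?_
  filter_upwards [eventually_gt_atTop 0] with n hn
  have hn' : (0 : ℝ) < n := Nat.cast_pos.2 hn
  rw [rpow_sub_one hn'.ne']
  push_cast
  field_simp

theorem hypCoeff_contiguous {α β γ : ℝ} (hγ : ∀ m : ℕ, γ ≠ -m) (n : ℕ) :
    γ * (γ - α - β) * hypCoeff α β γ n - (γ - α) * (γ - β) * hypCoeff α β (γ + 1) n =
      γ * n * hypCoeff α β γ n - γ * (n + 1 : ℕ) * hypCoeff α β γ (n + 1) := by
  have hγ0 : γ ≠ 0 := by simpa using hγ 0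
  have hγn : γ + n ≠ 0 := fun h => hγ n (by linarith)
  have hP := ascPochhammer_eval_ne_zero hγ n
  have hshift : (ascPochhammer ℝ n).eval (γ + 1) = (ascPochhammer ℝ n).eval γ * (γ + n) / γ := by
    rw [eq_div_iff hγ0, ← ascPochhammer_succ_eval, ascPochhammer_succ_left]
    simp [mul_comm]
  simp only [hypCoeff, hshift, ascPochhammer_succ_eval, Nat.factorial_succ]
  push_cast
  field_simp
  ring

theorem hypF_one_contiguous {α β γ : ℝ} (hγ : ∀ m : ℕ, γ ≠ -m) (h : 0 < γ - α - β) :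
    γ * (γ - α - β) * hypF α β γ 1 = (γ - α) * (γ - β) * hypF α β (γ + 1) 1 := by
  have hs := (summable_hypCoeff h).mul_left (γ * (γ - α - β))
  have hs₁ := (summable_hypCoeff (show 0 < γ + 1 - α - β by linarith)).mul_left ((γ - α) * (γ - β))
  have hu : Tendsto (fun n : ℕ => γ * n * hypCoeff α β γ n) atTop (𝓝 0) := by
    simpa [mul_assoc] using (tendsto_natCast_mul_hypCoeff h).const_mul γ
  have hdiff := funext (hypCoeff_contiguous (α := α) (β := β) hγ)
  have htel := tsum_sub_succ_of_tendsto (hdiff ▸ hs.sub hs₁) hu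
  rw [← hdiff, hs.tsum_sub hs₁, tsum_mul_left, tsum_mul_left] at htel
  rw [hypF_one, hypF_one]
  simpa [sub_eq_zero] using htel

theorem hypF_one_mul_ascPochhammer {α β γ : ℝ} (hγ : ∀ m : ℕ, γ ≠ -m) (h : 0 < γ - α - β)
    (m : ℕ) :
    hypF α β γ 1 * ((ascPochhammer ℝ m).eval γ * (ascPochhammer ℝ m).eval (γ - α - β)) =
      hypF α β (γ + m) 1 *
        ((ascPochhammer ℝ m).eval (γ - α) * (ascPochhammer ℝ m).eval (γ - β)) := by
  induction m with
  | zero => simp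
  | succ m ih =>
    have hγm : ∀ k : ℕ, γ + m ≠ -k := fun k hk => hγ (k + m) (by push_cast; linarith)
    have hc := hypF_one_contiguous hγm (by linarith [m.cast_nonneg (α := ℝ)] : 0 < γ + m - α - β)
    simp only [ascPochhammer_succ_eval]
    push_cast
    rw [← add_assoc]
    linear_combination ((γ + m) * (γ - α - β + m)) * ih +
      ((ascPochhammer ℝ m).eval (γ - α) * (ascPochhammer ℝ m).eval (γ - β)) * hc

theorem tendsto_hypF_one_add_nat {α β γ : ℝ} (h : 0 < γ - α - β) :
    Tendsto (fun m : ℕ => hypF α β (γ + m) 1) atTop (𝓝 1) := by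
  obtain ⟨m₀, hm₀⟩ := exists_nat_gt (-γ)
  have h₀ : 0 < γ + m₀ := by linarith
  have hlim : ∀ n, Tendsto (fun m : ℕ => hypCoeff α β (γ + m) n) atTop
      (𝓝 (if n = 0 then 1 else 0)) := by
    rintro (_ | n)
    · simp
    · have hP := (tendsto_ascPochhammer_eval_atTop n.succ_ne_zero).comp
        (tendsto_atTop_add_const_left _ γ tendsto_natCast_atTop_atTop)
      simpa [hypCoeff] using (tendsto_const_nhds.div_atTop hP).div_const ((n + 1) ! : ℝ)
  have hbound : ∀ᶠ m : ℕ in atTop, ∀ n, ‖hypCoeff α β (γ + m) n‖ ≤ |hypCoeff α β (γ + m₀) n| := by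
    filter_upwards [eventually_ge_atTop m₀] with m hm n
    have hle : γ + m₀ ≤ γ + m := by gcongr
    rw [norm_eq_abs, hypCoeff, hypCoeff, abs_div, abs_div, abs_div, abs_div,
      abs_of_pos (ascPochhammer_pos n _ h₀), abs_of_pos (ascPochhammer_pos n _ (h₀.trans_le hle))]
    gcongr
    · exact ascPochhammer_pos n _ h₀
    · exact ascPochhammer_eval_le_of_le h₀.le hle n
  have hsum := summable_hypCoeff (show 0 < γ + m₀ - α - β by linarith [m₀.cast_nonneg (α := ℝ)])
  simpa [hypF_one] using tendsto_tsum_of_dominated_convergence hsum.abs hlim hbound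

theorem hypF_one_eq_Gamma {α β γ : ℝ} (hγ : ∀ m : ℕ, γ ≠ -m) (h : 0 < γ - α - β) :
    hypF α β γ 1 = Gamma γ * Gamma (γ - α - β) / (Gamma (γ - α) * Gamma (γ - β)) := by
  have hratio := tendsto_rpow_mul_ascPochhammer_div (γ - α) (γ - β) γ (γ - α - β)
  rw [show γ + (γ - α - β) - (γ - α) - (γ - β) = 0 by ring] at hratio
  simp only [rpow_zero, one_mul] at hratio
  have hlim := ((tendsto_hypF_one_add_nat h).comp (tendsto_add_atTop_nat 1)).mul hratio
  rw [one_mul] at hlim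
  refine tendsto_nhds_unique (tendsto_const_nhds.congr fun m => ?_) hlim
  have hne := mul_ne_zero (ascPochhammer_eval_ne_zero hγ (m + 1))
    (ascPochhammer_pos (m + 1) _ h).ne'
  rw [Function.comp_apply, mul_div_assoc', eq_div_iff hne, hypF_one_mul_ascPochhammer hγ h]

theorem stmt_3 (α β γ : ℝ) (hγ : ∀ m : ℕ, γ ≠ -(m : ℝ)) (h : 0 < γ - α - β) :
    Tendsto (fun z => hypF α β γ z) (nhdsWithin 1 (Set.Iio 1))
      (nhds (Real.Gamma γ * Real.Gamma (γ - α - β) /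
        (Real.Gamma (γ - α) * Real.Gamma (γ - β)))) := by
  rw [← hypF_one_eq_Gamma hγ h, hypF_one]
  simp_rw [hypF_eq_tsum]
  exact tendsto_tsum_powerSeries_nhdsWithin_lt (summable_hypCoeff h).hasSum.tendsto_sum_nat
end

section
/- Let K(v) = F(b,β;γ;v)/F(b+1,β;γ;v) with β > 0 and 0 < b+1 < γ < b+1+β. If -1 < b < 0 and γ ≥ β, then F(b,β;γ;v) > 0 for all v ∈ [0,1), F(b,β;γ;v) is strictly decreasing in v, F(b+1,β;γ;v) is strictly increasing in v, and hence K(v) is monotone decreasing on [0,1). -/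
open Real Filter MeasureTheory

noncomputable def hcoef (a β γ : ℝ) (i : ℕ) : ℝ :=
  (ascPochhammer ℝ i).eval a * (ascPochhammer ℝ i).eval β /
    (ascPochhammer ℝ i).eval γ / (Nat.factorial i)

lemma hypF_eq (a β γ z : ℝ) : hypF a β γ z = ∑' i : ℕ, hcoef a β γ i * z ^ i := by
  unfold hypF hcoef
  refine tsum_congr fun i => by ring

lemma hcoef_zero (a β γ : ℝ) : hcoef a β γ 0 = 1 := by
  simp [hcoef]

lemma hcoef_one (a β γ : ℝ) : hcoef a β γ 1 = a * β / γ := by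
  simp [hcoef, ascPochhammer_one]

lemma hcoef_pos {a β γ : ℝ} (ha : 0 < a) (hβ : 0 < β) (hγ : 0 < γ) (i : ℕ) :
    0 < hcoef a β γ i := by
  unfold hcoef
  have h1 := ascPochhammer_pos i a ha
  have h2 := ascPochhammer_pos i β hβ
  have h3 := ascPochhammer_pos i γ hγ
  have h4 : (0:ℝ) < (Nat.factorial i : ℝ) := by positivity
  positivity

lemma hcoef_succ {γ : ℝ} (a β : ℝ) (hγ : 0 < γ) (i : ℕ) :
    hcoef a β γ (i + 1)
      = hcoef a β γ i * ((a + i) * (β + i) / ((γ + i) * ((i : ℝ) + 1))) := by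
  unfold hcoef
  rw [ascPochhammer_succ_eval, ascPochhammer_succ_eval, ascPochhammer_succ_eval,
    Nat.factorial_succ]
  have h3 : (ascPochhammer ℝ i).eval γ ≠ 0 := (ascPochhammer_pos i γ hγ).ne'
  have h4 : ((Nat.factorial i : ℝ)) ≠ 0 := by positivity
  have h5 : γ + (i:ℝ) ≠ 0 := by positivity
  have h6 : (i:ℝ) + 1 ≠ 0 := by positivity
  push_cast
  field_simp

lemma asc_succ_left_eval (n : ℕ) (x : ℝ) :
    (ascPochhammer ℝ (n + 1)).eval x = x * (ascPochhammer ℝ n).eval (x + 1) := by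
  rw [ascPochhammer_succ_left]
  simp [Polynomial.eval_comp]

lemma hcoef_b_succ {b β γ : ℝ} (hγ : 0 < γ) (j : ℕ) :
    hcoef b β γ (j + 1)
      = b * (hcoef (b + 1) β γ j * ((β + j) / ((γ + j) * ((j : ℝ) + 1)))) := by
  unfold hcoef
  rw [asc_succ_left_eval, ascPochhammer_succ_eval, ascPochhammer_succ_eval,
    Nat.factorial_succ]
  have h3 : (ascPochhammer ℝ j).eval γ ≠ 0 := (ascPochhammer_pos j γ hγ).ne'
  have h4 : ((Nat.factorial j : ℝ)) ≠ 0 := by positivity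
  have h5 : γ + (j:ℝ) ≠ 0 := by positivity
  have h6 : (j:ℝ) + 1 ≠ 0 := by positivity
  push_cast
  field_simp

lemma summable_hterm {a β γ v : ℝ} (hβ : 0 < β) (hγ : 0 < γ) (hd : a + β < γ + 1)
    (hv0 : 0 ≤ v) (hv1 : v < 1) :
    Summable (fun i : ℕ => hcoef a β γ i * v ^ i) := by
  obtain ⟨N, hN⟩ := exists_nat_gt (max (-a) ((a * β - γ) / (γ + 1 - a - β)))
  apply summable_of_ratio_norm_eventually_le hv1
  filter_upwards [Filter.eventually_ge_atTop N] with n hn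
  have hnN : (N : ℝ) ≤ (n : ℝ) := by exact_mod_cast hn
  have hna : -a < (n : ℝ) := lt_of_le_of_lt (le_max_left _ _) (lt_of_lt_of_le hN hnN)
  have hden : (0:ℝ) < γ + 1 - a - β := by linarith
  have hq : (a * β - γ) / (γ + 1 - a - β) < (n : ℝ) :=
    lt_of_le_of_lt (le_max_right _ _) (lt_of_lt_of_le hN hnN)
  have hq' : a * β - γ < (γ + 1 - a - β) * n := by
    rw [div_lt_iff₀ hden] at hq; linarith [hq]
  have hfac : (a + n) * (β + n) ≤ (γ + n) * ((n:ℝ) + 1) := by nlinarith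
  set r : ℝ := (a + n) * (β + n) / ((γ + n) * ((n:ℝ) + 1)) with hr
  have hDpos : (0:ℝ) < (γ + n) * ((n:ℝ) + 1) := by positivity
  have hr0 : 0 ≤ r := by
    apply div_nonneg _ hDpos.le
    nlinarith
  have hr1 : r ≤ 1 := by rw [hr, div_le_one hDpos]; exact hfac
  rw [hcoef_succ a β hγ n]
  have hvpow : (0:ℝ) ≤ v ^ n := pow_nonneg hv0 n
  have e1 : ‖hcoef a β γ n * r * v ^ (n + 1)‖ = ‖hcoef a β γ n‖ * (r * v ^ (n+1)) := by
    rw [norm_mul, norm_mul]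
    rw [Real.norm_eq_abs r, Real.norm_eq_abs (v ^ (n+1)), abs_of_nonneg hr0,
      abs_of_nonneg (pow_nonneg hv0 (n+1))]
    ring
  have e2 : v * ‖hcoef a β γ n * v ^ n‖ = ‖hcoef a β γ n‖ * (v * v ^ n) := by
    rw [norm_mul, Real.norm_eq_abs (v ^ n), abs_of_nonneg hvpow]; ring
  rw [e1, e2]
  apply mul_le_mul_of_nonneg_left _ (norm_nonneg _)
  have hvv : v ^ (n+1) = v * v ^ n := by ring
  rw [hvv]
  exact mul_le_of_le_one_left (mul_nonneg hv0 hvpow) hr1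

lemma key_ineq {b β γ : ℝ} (hβ : 0 < β) (hb : 0 < b + 1) (hγ : 0 < γ) (hγβ : β ≤ γ)
    (j : ℕ) :
    hcoef (b + 1) β γ (j + 1) ≤ hcoef (b + 1) β γ j + hcoef b β γ (j + 1) := by
  rw [hcoef_succ (b+1) β hγ j, hcoef_b_succ hγ j]
  set P : ℝ := hcoef (b + 1) β γ j with hPdef
  have hP : 0 < P := hcoef_pos hb hβ hγ j
  have h5 : (0:ℝ) < γ + j := by positivity
  have h6 : (0:ℝ) < (j:ℝ) + 1 := by positivity
  have hβj : (0:ℝ) < β + j := by positivity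
  have key : P + b * (P * ((β + j) / ((γ + j) * ((j:ℝ) + 1))))
      - P * ((b + 1 + j) * (β + j) / ((γ + j) * ((j:ℝ) + 1)))
      = P * (((j:ℝ) + 1) * (γ - β)) / ((γ + j) * ((j:ℝ) + 1)) := by
    field_simp
    ring
  have hnn : 0 ≤ P * (((j:ℝ) + 1) * (γ - β)) / ((γ + j) * ((j:ℝ) + 1)) := by
    apply div_nonneg _ (by positivity)
    have : 0 ≤ γ - β := by linarith
    positivity
  linarith [key, hnn]

lemma partial_bound {b β γ : ℝ} (hβ : 0 < β) (hb : 0 < b + 1) (hγ : 0 < γ)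
    (hγβ : β ≤ γ) (n : ℕ) :
    hcoef (b + 1) β γ n ≤ ∑ k ∈ Finset.range (n + 1), hcoef b β γ k := by
  induction n with
  | zero => simp [hcoef_zero]
  | succ n ih =>
      rw [Finset.sum_range_succ]
      have := key_ineq hβ hb hγ hγβ n
      linarith

lemma hcoef_b_neg {b β γ : ℝ} (hβ : 0 < β) (hb : 0 < b + 1) (hγ : 0 < γ)
    (hbneg : b < 0) (j : ℕ) : hcoef b β γ (j + 1) < 0 := by
  rw [hcoef_b_succ hγ j]
  have hP : 0 < hcoef (b + 1) β γ j := hcoef_pos hb hβ hγ j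
  have h1 : (0:ℝ) < (β + j) / ((γ + j) * ((j:ℝ) + 1)) := by positivity
  exact mul_neg_of_neg_of_pos hbneg (by positivity)

lemma sum_bound {b β γ : ℝ} (hβ : 0 < β) (hb : 0 < b + 1) (hγ : 0 < γ)
    (hγβ : β ≤ γ) (n : ℕ) :
    ∑ i ∈ Finset.range n, (-(hcoef b β γ (i + 1))) ≤ 1 := by
  have h := partial_bound hβ hb hγ hγβ n
  have hsplit : ∑ k ∈ Finset.range (n + 1), hcoef b β γ k
      = (∑ i ∈ Finset.range n, hcoef b β γ (i + 1)) + hcoef b β γ 0 :=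
    Finset.sum_range_succ' _ n
  have hpos : 0 < hcoef (b + 1) β γ n := hcoef_pos hb hβ hγ n
  rw [hcoef_zero] at hsplit
  have : ∑ i ∈ Finset.range n, (-(hcoef b β γ (i + 1)))
      = -(∑ i ∈ Finset.range n, hcoef b β γ (i + 1)) := by
    rw [Finset.sum_neg_distrib]
  linarith

lemma summable_d {b β γ : ℝ} (hβ : 0 < β) (hb : 0 < b + 1) (hγ : 0 < γ)
    (hγβ : β ≤ γ) (hbneg : b < 0) :
    Summable (fun i : ℕ => -(hcoef b β γ (i + 1))) :=
  summable_of_sum_range_le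
    (fun i => by linarith [hcoef_b_neg hβ hb hγ hbneg i])
    (sum_bound hβ hb hγ hγβ)

lemma tsum_d_le {b β γ : ℝ} (hβ : 0 < β) (hb : 0 < b + 1) (hγ : 0 < γ)
    (hγβ : β ≤ γ) (hbneg : b < 0) :
    ∑' i : ℕ, (-(hcoef b β γ (i + 1))) ≤ 1 :=
  Summable.tsum_le_of_sum_range_le (summable_d hβ hb hγ hγβ hbneg) (sum_bound hβ hb hγ hγβ)


lemma hypF_b_pos {b β γ v : ℝ} (hβ : 0 < β) (hb : 0 < b + 1) (hγ : 0 < γ)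
    (hγβ : β ≤ γ) (hbneg : b < 0) (hd : b + β < γ + 1)
    (hv0 : 0 ≤ v) (hv1 : v < 1) :
    0 < hypF b β γ v := by
  have hsum : Summable (fun i : ℕ => hcoef b β γ i * v ^ i) :=
    summable_hterm hβ hγ hd hv0 hv1
  rw [hypF_eq, Summable.tsum_eq_zero_add hsum, hcoef_zero]
  simp only [pow_zero, one_mul]
  have hsd := summable_d hβ hb hγ hγβ hbneg
  have hsumg : Summable (fun i : ℕ => v * hcoef b β γ (i + 1)) := by
    have h2 : Summable (fun i : ℕ => hcoef b β γ (i + 1)) := by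
      have h3 := hsd.neg
      simpa using h3
    exact h2.mul_left v
  have hptwise : ∀ i : ℕ, v * hcoef b β γ (i + 1) ≤ hcoef b β γ (i + 1) * v ^ (i + 1) := by
    intro i
    have hc : hcoef b β γ (i + 1) < 0 := hcoef_b_neg hβ hb hγ hbneg i
    have hpow : v ^ (i + 1) ≤ v := by
      have h5 := pow_le_pow_of_le_one hv0 hv1.le (show 1 ≤ i + 1 by omega)
      simpa using h5
    nlinarith
  have hTs : Summable (fun i : ℕ => hcoef b β γ (i + 1) * v ^ (i + 1)) := by
    have h6 := (summable_nat_add_iff (f := fun i : ℕ => hcoef b β γ i * v ^ i) 1).mpr hsum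
    exact h6
  have hge : ∑' i : ℕ, v * hcoef b β γ (i + 1)
      ≤ ∑' i : ℕ, hcoef b β γ (i + 1) * v ^ (i + 1) :=
    Summable.tsum_le_tsum hptwise hsumg hTs
  have hleft : ∑' i : ℕ, v * hcoef b β γ (i + 1)
      = v * ∑' i : ℕ, hcoef b β γ (i + 1) := tsum_mul_left
  have hC : -1 ≤ ∑' i : ℕ, hcoef b β γ (i + 1) := by
    have h1 := tsum_d_le hβ hb hγ hγβ hbneg
    rw [tsum_neg] at h1
    linarith
  have hm : v * (-1 : ℝ) ≤ v * ∑' i : ℕ, hcoef b β γ (i + 1) :=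
    mul_le_mul_of_nonneg_left hC hv0
  rw [hleft] at hge
  linarith

lemma hypF_strictMono {b β γ : ℝ} (hβ : 0 < β) (hb : 0 < b + 1) (hγ : 0 < γ)
    (hd : b + 1 + β < γ + 1) :
    StrictMonoOn (fun v => hypF (b + 1) β γ v) (Set.Ico (0:ℝ) 1) := by
  intro v1 hv1 v2 hv2 h12
  simp only
  rw [hypF_eq, hypF_eq]
  have hs1 : Summable (fun i : ℕ => hcoef (b+1) β γ i * v1 ^ i) :=
    summable_hterm hβ hγ hd hv1.1 hv1.2
  have hs2 : Summable (fun i : ℕ => hcoef (b+1) β γ i * v2 ^ i) :=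
    summable_hterm hβ hγ hd hv2.1 hv2.2
  refine Summable.tsum_lt_tsum (i := 1) (fun i => ?_) ?_ hs1 hs2
  · exact mul_le_mul_of_nonneg_left (pow_le_pow_left₀ hv1.1 h12.le i)
      (hcoef_pos hb hβ hγ i).le
  · have hc : 0 < hcoef (b+1) β γ 1 := hcoef_pos hb hβ hγ 1
    simp only [pow_one]
    exact mul_lt_mul_of_pos_left h12 hc

lemma hypF_strictAnti {b β γ : ℝ} (hβ : 0 < β) (hb : 0 < b + 1) (hγ : 0 < γ)
    (hbneg : b < 0) (hd : b + β < γ + 1) :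
    StrictAntiOn (fun v => hypF b β γ v) (Set.Ico (0:ℝ) 1) := by
  intro v1 hv1 v2 hv2 h12
  simp only
  rw [hypF_eq, hypF_eq]
  have hs1 : Summable (fun i : ℕ => hcoef b β γ i * v1 ^ i) :=
    summable_hterm hβ hγ hd hv1.1 hv1.2
  have hs2 : Summable (fun i : ℕ => hcoef b β γ i * v2 ^ i) :=
    summable_hterm hβ hγ hd hv2.1 hv2.2
  refine Summable.tsum_lt_tsum (i := 1) (fun i => ?_) ?_ hs2 hs1
  · match i with
    | 0 => simp
    | (j+1) =>
        have hc : hcoef b β γ (j + 1) < 0 := hcoef_b_neg hβ hb hγ hbneg j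
        have hpow : v1 ^ (j+1) ≤ v2 ^ (j+1) := pow_le_pow_left₀ hv1.1 h12.le (j+1)
        nlinarith
  · have hc : hcoef b β γ 1 < 0 := hcoef_b_neg hβ hb hγ hbneg 0
    simp only [pow_one]
    nlinarith

theorem stmt_9 (b β γ : ℝ) (hβ : 0 < β) (hb : 0 < b + 1) (h1 : b + 1 < γ)
    (h2 : γ < b + 1 + β) (hbneg : -1 < b ∧ b < 0) (hγβ : γ ≥ β) (K : ℝ → ℝ)
    (hK : ∀ v ∈ Set.Ico (0:ℝ) 1, K v = hypF b β γ v / hypF (b + 1) β γ v) :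
    (∀ v ∈ Set.Ico (0:ℝ) 1, 0 < hypF b β γ v) ∧
      StrictAntiOn (fun v => hypF b β γ v) (Set.Ico (0:ℝ) 1) ∧
      StrictMonoOn (fun v => hypF (b + 1) β γ v) (Set.Ico (0:ℝ) 1) ∧
      AntitoneOn K (Set.Ico (0:ℝ) 1) := by
  have hγ : 0 < γ := lt_trans hb h1
  have hd1 : b + β < γ + 1 := by linarith [hγβ, hbneg.2]
  have hd2 : b + 1 + β < γ + 1 := by linarith [hγβ, hbneg.2]
  have hposb : ∀ v ∈ Set.Ico (0:ℝ) 1, 0 < hypF b β γ v := fun v hv =>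
    hypF_b_pos hβ hb hγ hγβ hbneg.2 hd1 hv.1 hv.2
  have hmono := hypF_strictMono (b := b) hβ hb hγ hd2
  have hanti := hypF_strictAnti (b := b) hβ hb hγ hbneg.2 hd1
  refine ⟨hposb, hanti, hmono, ?_⟩
  -- positivity of hypF (b+1)
  have hpos1 : ∀ v ∈ Set.Ico (0:ℝ) 1, 0 < hypF (b + 1) β γ v := by
    intro v hv
    rw [hypF_eq]
    have hs : Summable (fun i : ℕ => hcoef (b+1) β γ i * v ^ i) :=
      summable_hterm hβ hγ hd2 hv.1 hv.2
    refine Summable.tsum_pos hs (fun i => ?_) 0 ?_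
    · exact mul_nonneg (hcoef_pos hb hβ hγ i).le (pow_nonneg hv.1 i)
    · simp [hcoef_zero]
  intro v1 hv1 v2 hv2 h12
  rw [hK v1 hv1, hK v2 hv2]
  rcases eq_or_lt_of_le h12 with rfl | hlt
  · exact le_refl _
  · exact div_le_div₀ (hposb v1 hv1).le (le_of_lt (hanti hv1 hv2 hlt)) (hpos1 v1 hv1)
      (le_of_lt (hmono hv1 hv2 hlt))
end

section
/- Under the assumptions e > -p/2 - n/2 - 1, -p/2 - 1 < a < n/2 + e, and b > -1, the shrinkage factor φ(w) defined by the ratio of Beta-type integrals satisfies lim_{w→∞} φ(w) = (p/2 + a + 1)/(n/2 + e - a). -/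
open Real Filter MeasureTheory

/-!
Write `c = p/2 + a` and `s = p/2 + n/2 + e + 2`, so that `φ(w) = w I_{c+1}(w) / I_c(w)` with
`I_c(w) = ∫₀¹ l^c (1-l)^b (1+wl)^(-s) dl`. The substitution `u = wl` turns `w^(c+1) I_c(w)`
into `∫₀^w u^c (1-u/w)^b (1+u)^(-s) du`; on `u ≤ w/2` dominated convergence gives the limit
`J_c = ∫₀^∞ u^c (1+u)^(-s) du`, while the part `l ≥ 1/2` is `O(w^(c+1-s)) → 0`.
Hence `φ(w) → J_{c+1} / J_c`, and integrating by parts, `(s - c - 2) J_{c+1} = (c + 1) J_c`.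
-/

open Set Topology

/-- The beta integral of the second kind, `B(c + 1, s - c - 1)`. -/
noncomputable def betaPrimeIntegral (c s : ℝ) : ℝ :=
  ∫ u in Ioi (0:ℝ), u ^ c * (1 + u) ^ (-s)

lemma rpow_le_max_one_rpow {x y : ℝ} (hy : 0 < y) (hyx : y ≤ x) (hx : x ≤ 1) (c : ℝ) :
    x ^ c ≤ max 1 (y ^ c) := by
  rcases le_or_gt 0 c with hc | hc
  · exact le_max_of_le_left (rpow_le_one (hy.le.trans hyx) hx hc)
  · exact le_max_of_le_right (rpow_le_rpow_of_nonpos hy hyx hc.le)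

lemma tendsto_rpow_mul_one_add_mul_rpow_neg_atTop {α β k : ℝ} (hk : 0 < k) (hβ : 0 ≤ β)
    (hαβ : α < β) : Tendsto (fun x : ℝ => x ^ α * (1 + x * k) ^ (-β)) atTop (𝓝 0) := by
  have hpow : Tendsto (fun x : ℝ => k ^ (-β) * x ^ (α - β)) atTop (𝓝 0) := by
    simpa using (tendsto_rpow_neg_atTop (y := β - α) (by linarith)).const_mul (k ^ (-β))
  refine squeeze_zero' ?_ ?_ hpow
  · filter_upwards [eventually_gt_atTop 0] with x hx
    positivity
  · filter_upwards [eventually_gt_atTop 0] with x hx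
    calc x ^ α * (1 + x * k) ^ (-β) ≤ x ^ α * (x * k) ^ (-β) := by
          refine mul_le_mul_of_nonneg_left ?_ (by positivity)
          exact rpow_le_rpow_of_nonpos (by positivity) (by linarith) (by linarith)
      _ = k ^ (-β) * x ^ (α - β) := by
          rw [mul_rpow hx.le hk.le, sub_eq_add_neg, rpow_add hx]
          ring

section BetaPrime

variable {c s : ℝ}

lemma integrableOn_rpow_mul_one_add_rpow_neg (hc : -1 < c) (hcs : c + 1 < s) :
    IntegrableOn (fun u : ℝ => u ^ c * (1 + u) ^ (-s)) (Ioi 0) := by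
  have hmeas : AEStronglyMeasurable (fun u : ℝ => u ^ c * (1 + u) ^ (-s)) :=
    (by fun_prop : Measurable fun u : ℝ => u ^ c * (1 + u) ^ (-s)).aestronglyMeasurable
  rw [← Ioc_union_Ioi_eq_Ioi zero_le_one]
  refine IntegrableOn.union ?_ ?_
  · have hint : IntegrableOn (fun u : ℝ => u ^ c) (Ioc 0 1) :=
      (intervalIntegrable_iff_integrableOn_Ioc_of_le zero_le_one).mp
        (intervalIntegral.intervalIntegrable_rpow' hc)
    refine hint.mono' hmeas.restrict ?_
    filter_upwards [ae_restrict_mem measurableSet_Ioc] with u hu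
    rw [norm_of_nonneg (by have := hu.1; positivity)]
    calc u ^ c * (1 + u) ^ (-s) ≤ u ^ c * 1 := by
          gcongr
          · exact (rpow_pos_of_pos hu.1 c).le
          · exact rpow_le_one_of_one_le_of_nonpos (by linarith [hu.1]) (by linarith)
      _ = u ^ c := mul_one _
  · have hint : IntegrableOn (fun u : ℝ => u ^ (c - s)) (Ioi 1) :=
      integrableOn_Ioi_rpow_of_lt (by linarith) one_pos
    refine hint.mono' hmeas.restrict ?_
    filter_upwards [ae_restrict_mem measurableSet_Ioi] with u (hu : 1 < u)
    have hu0 : 0 < u := one_pos.trans hu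
    rw [norm_of_nonneg (by positivity)]
    calc u ^ c * (1 + u) ^ (-s) ≤ u ^ c * u ^ (-s) := by
          refine mul_le_mul_of_nonneg_left ?_ (by positivity)
          exact rpow_le_rpow_of_nonpos hu0 (by linarith) (by linarith)
      _ = u ^ (c - s) := by rw [← rpow_add hu0, sub_eq_add_neg]

lemma betaPrimeIntegral_pos (hc : -1 < c) (hcs : c + 1 < s) : 0 < betaPrimeIntegral c s := by
  have hpos : ∀ u ∈ Ioi (0:ℝ), 0 < u ^ c * (1 + u) ^ (-s) := fun u (hu : 0 < u) => by
    positivity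
  rw [betaPrimeIntegral, setIntegral_pos_iff_support_of_nonneg_ae
    ((ae_restrict_iff' measurableSet_Ioi).mpr (.of_forall fun u hu => (hpos u hu).le))
    (integrableOn_rpow_mul_one_add_rpow_neg hc hcs)]
  calc (0 : ENNReal) < volume (Ioi (0:ℝ)) := by simp
    _ ≤ _ := measure_mono fun u hu => show u ∈ Function.support _ ∩ Ioi 0 from
      ⟨(hpos u hu).ne', hu⟩

lemma betaPrimeIntegral_add_one (hc : -1 < c) (hcs : c + 2 < s) :
    (s - c - 2) * betaPrimeIntegral (c + 1) s = (c + 1) * betaPrimeIntegral c s := by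
  set f : ℝ → ℝ := fun u => u ^ (c + 1) * (1 + u) ^ (-(s - 1))
  set g : ℝ → ℝ := fun u => u ^ c * (1 + u) ^ (-s)
  set g₁ : ℝ → ℝ := fun u => u ^ (c + 1) * (1 + u) ^ (-s)
  have hg : IntegrableOn g (Ioi 0) := integrableOn_rpow_mul_one_add_rpow_neg hc (by linarith)
  have hg₁ : IntegrableOn g₁ (Ioi 0) :=
    integrableOn_rpow_mul_one_add_rpow_neg (by linarith) (by linarith)
  have hderiv : ∀ x ∈ Ioi (0:ℝ), HasDerivAt f ((c + 1) * g x + (c + 2 - s) * g₁ x) x := by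
    intro x (hx : 0 < x)
    have hx1 : 0 < 1 + x := by linarith
    have hprod := (hasDerivAt_rpow_const (p := c + 1) (.inl hx.ne')).mul
      (((hasDerivAt_id x).const_add 1).rpow_const (p := -(s - 1)) (.inl hx1.ne'))
    refine hprod.congr_deriv ?_
    simp only [g, g₁, id, add_sub_cancel_right]
    rw [show -(s - 1) - 1 = -s by ring, show -(s - 1) = -s + 1 by ring, rpow_add_one hx1.ne',
      rpow_add_one hx.ne']
    ring
  have hf0 : ContinuousWithinAt f (Ici 0) 0 :=
    ((continuousAt_rpow_const 0 (c + 1) (.inr (by linarith))).mul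
      ((continuous_const.add continuous_id).continuousAt.rpow_const (.inl (by norm_num)))
      ).continuousWithinAt
  have hf_atTop : Tendsto f atTop (𝓝 0) := by
    simpa [f] using tendsto_rpow_mul_one_add_mul_rpow_neg_atTop (α := c + 1) (β := s - 1)
      one_pos (by linarith) (by linarith)
  have hFTC := integral_Ioi_of_hasDerivAt_of_tendsto hf0 hderiv
    ((hg.const_mul _).add (hg₁.const_mul _)) hf_atTop
  rw [integral_add (hg.const_mul _) (hg₁.const_mul _), integral_const_mul, integral_const_mul]
    at hFTC
  simp only [f, zero_rpow (by linarith : c + 1 ≠ 0), zero_mul, sub_zero] at hFTC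
  simp only [betaPrimeIntegral]
  linarith

end BetaPrime

noncomputable def eulerIntegrand (b c s w l : ℝ) : ℝ :=
  l ^ c * (1 - l) ^ b * (1 + w * l) ^ (-s)

noncomputable def eulerIntegral (b c s w : ℝ) : ℝ :=
  ∫ l in (0:ℝ)..1, eulerIntegrand b c s w l

section Euler

variable {b c s : ℝ}

lemma intervalIntegrable_rpow_mul_one_sub_rpow_zero_half (hc : -1 < c) (b : ℝ) :
    IntervalIntegrable (fun l : ℝ => l ^ c * (1 - l) ^ b) volume 0 (1 / 2) := by
  have hmeas : Measurable fun l : ℝ => l ^ c * (1 - l) ^ b := by fun_prop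
  refine ((intervalIntegral.intervalIntegrable_rpow' hc).const_mul
    (max 1 ((1 / 2 : ℝ) ^ b))).mono_fun' hmeas.aestronglyMeasurable ?_
  rw [EventuallyLE, ae_restrict_iff' measurableSet_uIoc, uIoc_of_le (by norm_num)]
  refine .of_forall fun l ⟨hl0, hl⟩ => ?_
  have h1l : 0 ≤ 1 - l := by linarith
  rw [norm_of_nonneg (by positivity), mul_comm]
  gcongr
  exact rpow_le_max_one_rpow (by norm_num) (by linarith) (by linarith) b

lemma intervalIntegrable_rpow_mul_one_sub_rpow (hb : -1 < b) (hc : -1 < c) :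
    IntervalIntegrable (fun l : ℝ => l ^ c * (1 - l) ^ b) volume 0 1 := by
  have hright := (intervalIntegrable_rpow_mul_one_sub_rpow_zero_half hb c).comp_sub_left 1
  norm_num only [sub_sub_cancel] at hright
  refine (intervalIntegrable_rpow_mul_one_sub_rpow_zero_half hc b).trans ?_
  simpa only [mul_comm] using hright.symm

variable {w l : ℝ}

lemma eulerIntegrand_nonneg (hw : 0 ≤ w) (hl : l ∈ Icc (0:ℝ) 1) :
    0 ≤ eulerIntegrand b c s w l := by
  obtain ⟨hl0, hl1⟩ := hl
  have h1l : 0 ≤ 1 - l := by linarith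
  have hwl : 0 ≤ 1 + w * l := by positivity
  unfold eulerIntegrand
  positivity

lemma eulerIntegrand_le {l₀ : ℝ} (hw : 0 ≤ w) (hs : 0 ≤ s) (hl₀ : 0 ≤ l₀)
    (hl : l ∈ Icc l₀ 1) :
    eulerIntegrand b c s w l ≤ (1 + w * l₀) ^ (-s) * (l ^ c * (1 - l) ^ b) := by
  obtain ⟨hl0, hl1⟩ := hl
  have hl : 0 ≤ l := hl₀.trans hl0
  have h1l : 0 ≤ 1 - l := by linarith
  rw [eulerIntegrand, mul_comm]
  refine mul_le_mul_of_nonneg_right ?_ (by positivity)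
  exact rpow_le_rpow_of_nonpos (by positivity) (by gcongr) (by linarith)

lemma intervalIntegrable_eulerIntegrand (hb : -1 < b) (hc : -1 < c) (hs : 0 ≤ s) (hw : 0 ≤ w) :
    IntervalIntegrable (eulerIntegrand b c s w) volume 0 1 := by
  have hmeas : Measurable (eulerIntegrand b c s w) := by unfold eulerIntegrand; fun_prop
  refine (intervalIntegrable_rpow_mul_one_sub_rpow hb hc).mono_fun'
    hmeas.aestronglyMeasurable ?_
  rw [EventuallyLE, ae_restrict_iff' measurableSet_uIoc, uIoc_of_le zero_le_one]
  refine .of_forall fun l hl => ?_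
  have hl' := Ioc_subset_Icc_self hl
  rw [norm_of_nonneg (eulerIntegrand_nonneg hw hl')]
  simpa using eulerIntegrand_le hw hs le_rfl hl'

lemma tendsto_rpow_mul_integral_eulerIntegrand_half_one (hb : -1 < b) (hc : -1 < c)
    (hcs : c + 1 < s) :
    Tendsto (fun w : ℝ => w ^ (c + 1) * ∫ l in (1 / 2 : ℝ)..1, eulerIntegrand b c s w l)
      atTop (𝓝 0) := by
  have hs : 0 ≤ s := by linarith
  set K := ∫ l in (1 / 2 : ℝ)..1, l ^ c * (1 - l) ^ b
  have hK : IntervalIntegrable (fun l : ℝ => l ^ c * (1 - l) ^ b) volume (1 / 2) 1 :=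
    (intervalIntegrable_rpow_mul_one_sub_rpow hb hc).mono_set
      (uIcc_subset_uIcc (by norm_num [uIcc_of_le]) (by simp))
  have hdecay :
      Tendsto (fun w : ℝ => K * (w ^ (c + 1) * (1 + w * (1 / 2)) ^ (-s))) atTop (𝓝 0) := by
    simpa using (tendsto_rpow_mul_one_add_mul_rpow_neg_atTop (α := c + 1) (β := s)
      (by norm_num : (0:ℝ) < 1 / 2) hs hcs).const_mul K
  refine squeeze_zero' ?_ ?_ hdecay
  · filter_upwards [eventually_gt_atTop 0] with w hw
    refine mul_nonneg (by positivity) (intervalIntegral.integral_nonneg (by norm_num) ?_)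
    exact fun l hl => eulerIntegrand_nonneg hw.le ⟨by linarith [hl.1], hl.2⟩
  · filter_upwards [eventually_gt_atTop 0] with w hw
    have hbound : ∫ l in (1 / 2 : ℝ)..1, eulerIntegrand b c s w l
        ≤ ∫ l in (1 / 2 : ℝ)..1, (1 + w * (1 / 2)) ^ (-s) * (l ^ c * (1 - l) ^ b) :=
      intervalIntegral.integral_mono_on (by norm_num)
        ((intervalIntegrable_eulerIntegrand hb hc hs hw.le).mono_set
          (uIcc_subset_uIcc (by norm_num [uIcc_of_le]) (by simp)))
        (hK.const_mul _) fun l hl => eulerIntegrand_le hw.le hs (by norm_num) hl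
    rw [intervalIntegral.integral_const_mul] at hbound
    calc w ^ (c + 1) * ∫ l in (1 / 2 : ℝ)..1, eulerIntegrand b c s w l
        ≤ w ^ (c + 1) * ((1 + w * (1 / 2)) ^ (-s) * K) := by gcongr
      _ = K * (w ^ (c + 1) * (1 + w * (1 / 2)) ^ (-s)) := by ring

lemma rpow_add_one_mul_integral_eulerIntegrand {d : ℝ} (hw : 0 < w) (hd : 0 ≤ d) :
    w ^ (c + 1) * ∫ l in (0:ℝ)..d, eulerIntegrand b c s w l
      = ∫ u in (0:ℝ)..w * d, u ^ c * (1 - u / w) ^ b * (1 + u) ^ (-s) := by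
  have hsubst := intervalIntegral.integral_comp_mul_left
    (fun u : ℝ => u ^ c * (1 - u / w) ^ b * (1 + u) ^ (-s)) (a := 0) (b := d) hw.ne'
  rw [mul_zero, smul_eq_mul] at hsubst
  rw [← mul_inv_cancel_left₀ hw.ne' (∫ u in (0:ℝ)..w * d, _), ← hsubst,
    rpow_add_one hw.ne', mul_comm _ w, mul_assoc, ← intervalIntegral.integral_const_mul]
  congr 1
  refine intervalIntegral.integral_congr fun l hl => ?_
  rw [uIcc_of_le hd] at hl
  simp only [eulerIntegrand, mul_div_cancel_left₀ _ hw.ne', mul_rpow hw.le hl.1]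
  ring

lemma tendsto_integral_rpow_mul_one_sub_div_rpow (hc : -1 < c) (hcs : c + 1 < s) (b : ℝ) :
    Tendsto (fun w : ℝ => ∫ u in (0:ℝ)..w * (1 / 2), u ^ c * (1 - u / w) ^ b * (1 + u) ^ (-s))
      atTop (𝓝 (betaPrimeIntegral c s)) := by
  set f : ℝ → ℝ → ℝ := fun w u => u ^ c * (1 - u / w) ^ b * (1 + u) ^ (-s)
  set M := max 1 ((1 / 2 : ℝ) ^ b)
  have hM : 0 ≤ M := zero_le_one.trans (le_max_left _ _)
  have hDCT : Tendsto (fun w => ∫ u in Ioi 0, (Ioc 0 (w * (1 / 2))).indicator (f w) u) atTop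
      (𝓝 (betaPrimeIntegral c s)) := by
    refine tendsto_integral_filter_of_dominated_convergence
      (fun u => M * (u ^ c * (1 + u) ^ (-s))) (.of_forall fun w => ?_) ?_
      ((integrableOn_rpow_mul_one_add_rpow_neg hc hcs).const_mul M) ?_
    · exact ((by fun_prop : Measurable (f w)).indicator measurableSet_Ioc).aestronglyMeasurable
    · filter_upwards [eventually_gt_atTop 0] with w hw
      refine (ae_restrict_iff' measurableSet_Ioi).mpr (.of_forall fun u (hu : 0 < u) => ?_)
      by_cases hmem : u ∈ Ioc 0 (w * (1 / 2))
      · have huw : u / w ≤ 1 / 2 := by rw [div_le_iff₀ hw]; linarith [hmem.2]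
        have h1uw : 1 / 2 ≤ 1 - u / w := by linarith
        have hbound : (1 - u / w) ^ b ≤ M :=
          rpow_le_max_one_rpow (by norm_num) h1uw (by linarith [div_nonneg hu.le hw.le]) b
        rw [indicator_of_mem hmem, norm_of_nonneg (by simp only [f]; positivity)]
        calc u ^ c * (1 - u / w) ^ b * (1 + u) ^ (-s)
            ≤ u ^ c * M * (1 + u) ^ (-s) := by gcongr
          _ = M * (u ^ c * (1 + u) ^ (-s)) := by ring
      · rw [indicator_of_notMem hmem, norm_zero]
        positivity
    · refine (ae_restrict_iff' measurableSet_Ioi).mpr (.of_forall fun u (hu : 0 < u) => ?_)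
      have hf : Tendsto (fun w => f w u) atTop (𝓝 (u ^ c * (1 + u) ^ (-s))) := by
        have h1 : Tendsto (fun w => (1 - u / w) ^ b) atTop (𝓝 1) := by
          simpa using ((tendsto_const_nhds.div_atTop tendsto_id).const_sub 1).rpow_const
            (p := b) (.inl (by norm_num))
        simpa using (h1.const_mul (u ^ c)).mul_const ((1 + u) ^ (-s))
      refine hf.congr' ?_
      filter_upwards [eventually_ge_atTop (2 * u)] with w hw
      rw [indicator_of_mem (show u ∈ Ioc 0 (w * (1 / 2)) from ⟨hu, by linarith⟩)]
  refine hDCT.congr' ?_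
  filter_upwards [eventually_gt_atTop 0] with w hw
  rw [intervalIntegral.integral_of_le (by positivity), integral_indicator measurableSet_Ioc,
    Measure.restrict_restrict measurableSet_Ioc, inter_eq_left.mpr Ioc_subset_Ioi_self]

theorem tendsto_rpow_mul_eulerIntegral (hb : -1 < b) (hc : -1 < c) (hcs : c + 1 < s) :
    Tendsto (fun w => w ^ (c + 1) * eulerIntegral b c s w) atTop
      (𝓝 (betaPrimeIntegral c s)) := by
  have hs : 0 ≤ s := by linarith
  have hsplit := (tendsto_integral_rpow_mul_one_sub_div_rpow hc hcs b).add
    (tendsto_rpow_mul_integral_eulerIntegrand_half_one hb hc hcs)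
  rw [add_zero] at hsplit
  refine hsplit.congr' ?_
  filter_upwards [eventually_gt_atTop 0] with w hw
  have hint := intervalIntegrable_eulerIntegrand hb hc hs hw.le
  rw [← rpow_add_one_mul_integral_eulerIntegrand hw (by norm_num), ← mul_add, eulerIntegral,
    intervalIntegral.integral_add_adjacent_intervals
      (hint.mono_set (uIcc_subset_uIcc (by simp) (by norm_num [uIcc_of_le])))
      (hint.mono_set (uIcc_subset_uIcc (by norm_num [uIcc_of_le]) (by simp)))]

theorem tendsto_mul_eulerIntegral_div_eulerIntegral (hb : -1 < b) (hc : -1 < c)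
    (hcs : c + 2 < s) :
    Tendsto (fun w => w * eulerIntegral b (c + 1) s w / eulerIntegral b c s w) atTop
      (𝓝 ((c + 1) / (s - c - 2))) := by
  have hJ := betaPrimeIntegral_pos hc (by linarith : c + 1 < s)
  have hratio :
      betaPrimeIntegral (c + 1) s / betaPrimeIntegral c s = (c + 1) / (s - c - 2) := by
    rw [div_eq_div_iff hJ.ne' (by linarith)]
    linear_combination betaPrimeIntegral_add_one hc hcs
  rw [← hratio]
  refine ((tendsto_rpow_mul_eulerIntegral hb (by linarith) (by linarith)).div
    (tendsto_rpow_mul_eulerIntegral hb hc (by linarith)) hJ.ne').congr' ?_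
  filter_upwards [eventually_gt_atTop 0] with w hw
  rw [Pi.div_apply, rpow_add_one hw.ne' (c + 1), mul_comm _ w, mul_assoc, mul_left_comm,
    mul_div_mul_left _ _ (rpow_pos_of_pos hw _).ne']

end Euler

theorem stmt_12_general (p n : ℕ) (a b e : ℝ)
    (ha1 : -(p:ℝ)/2 - 1 < a) (ha2 : a < (n:ℝ)/2 + e)
    (hb : -1 < b) (φ : ℝ → ℝ)
    (hφ : ∀ w > (0:ℝ), φ w =
      w * (∫ l in (0:ℝ)..1, l ^ ((p:ℝ)/2 + a + 1) * (1 - l) ^ b *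
            (1 + w * l) ^ (-((p:ℝ)/2 + (n:ℝ)/2 + e + 2))) /
          (∫ l in (0:ℝ)..1, l ^ ((p:ℝ)/2 + a) * (1 - l) ^ b *
            (1 + w * l) ^ (-((p:ℝ)/2 + (n:ℝ)/2 + e + 2)))) :
    Tendsto φ atTop (nhds (((p:ℝ)/2 + a + 1) / ((n:ℝ)/2 + e - a))) := by
  have hlim := tendsto_mul_eulerIntegral_div_eulerIntegral (c := (p:ℝ)/2 + a)
    (s := (p:ℝ)/2 + (n:ℝ)/2 + e + 2) hb (by linarith) (by linarith)
  rw [show (p:ℝ)/2 + (n:ℝ)/2 + e + 2 - ((p:ℝ)/2 + a) - 2 = (n:ℝ)/2 + e - a by ring] at hlim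
  refine hlim.congr' ?_
  filter_upwards [eventually_gt_atTop 0] with w hw
  exact (hφ w hw).symm

theorem stmt_12 (p n : ℕ) (hp : 3 ≤ p) (hn : 1 ≤ n) (a b e : ℝ)
    (he : -(p:ℝ)/2 - (n:ℝ)/2 - 1 < e) (ha1 : -(p:ℝ)/2 - 1 < a) (ha2 : a < (n:ℝ)/2 + e)
    (hb : -1 < b) (φ : ℝ → ℝ)
    (hφ : ∀ w > (0:ℝ), φ w =
      w * (∫ l in (0:ℝ)..1, l ^ ((p:ℝ)/2 + a + 1) * (1 - l) ^ b *
            (1 + w * l) ^ (-((p:ℝ)/2 + (n:ℝ)/2 + e + 2))) /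
          (∫ l in (0:ℝ)..1, l ^ ((p:ℝ)/2 + a) * (1 - l) ^ b *
            (1 + w * l) ^ (-((p:ℝ)/2 + (n:ℝ)/2 + e + 2)))) :
    Tendsto φ atTop (nhds (((p:ℝ)/2 + a + 1) / ((n:ℝ)/2 + e - a))) :=
  stmt_12_general p n a b e ha1 ha2 hb φ hφ
end

section
/- Let p ≥ 3, n ≥ 1 be integers and suppose e > -p/2 - n/2 - 1, c(p,n) = 2(p-2)/(n+2), and -p/2-1 < a < (c(p,n)(n/2+e) - p/2 - 1)/(1 + c(p,n)). Let α = (p/2+a+1)/(n/2+e-a). If b satisfies -(n+2)(c(p,n)-α)/(4(p+a+1)(α+1)) ≤ b, then with M₁ = α/(b+1+αb) and M₂ = -(p/2+a+2)b/(b+1), the inequality ((n+2)(M₁ - c(p,n)))/(1+M₁) + 4M₂ ≤ 0 holds. -/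
open Real Filter MeasureTheory

set_option maxHeartbeats 1600000 in
theorem stmt_16 (p n : ℕ) (hp : 3 ≤ p) (hn : 1 ≤ n) (a b e : ℝ)
    (he : -(p:ℝ)/2 - (n:ℝ)/2 - 1 < e)
    (c : ℝ) (hc : c = 2 * ((p:ℝ) - 2) / ((n:ℝ) + 2))
    (ha1 : -(p:ℝ)/2 - 1 < a) (ha2 : a < (c * ((n:ℝ)/2 + e) - (p:ℝ)/2 - 1) / (1 + c))
    (α : ℝ) (hα : α = ((p:ℝ)/2 + a + 1) / ((n:ℝ)/2 + e - a))
    (hb0 : -1 < b) (hb1 : b < min 0 ((n:ℝ)/2 + e - a - 1))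
    (hb : -((n:ℝ) + 2) * (c - α) / (4 * ((p:ℝ) + a + 1) * (α + 1)) ≤ b)
    (M₁ M₂ : ℝ) (hM₁ : M₁ = α / (b + 1 + α * b)) (hM₂ : M₂ = -((p:ℝ)/2 + a + 2) * b / (b + 1)) :
    ((n:ℝ) + 2) * (M₁ - c) / (1 + M₁) + 4 * M₂ ≤ 0 := by

  have hp3 : (3:ℝ) ≤ (p:ℝ) := by exact_mod_cast hp
  have hn1 : (1:ℝ) ≤ (n:ℝ) := by exact_mod_cast hn
  have hn2 : (0:ℝ) < (n:ℝ) + 2 := by linarith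
  have hc0 : 0 < c := by
    rw [hc]; exact div_pos (by linarith) hn2
  have hcid : ((n:ℝ) + 2) * c = 2 * ((p:ℝ) - 2) := by
    rw [hc]; field_simp
  have hpa1 : 0 < (p:ℝ) + a + 1 := by linarith
  have hpa2 : 0 < (p:ℝ)/2 + a + 1 := by linarith
  have hb1' : b < (n:ℝ)/2 + e - a - 1 := lt_of_lt_of_le hb1 (min_le_right _ _)
  have hbneg : b < 0 := lt_of_lt_of_le hb1 (min_le_left _ _)
  have hN : 0 < (n:ℝ)/2 + e - a := by linarith
  have hα0 : 0 < α := hα ▸ div_pos hpa2 hN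
  have hαc : α < c := by
    rw [hα, div_lt_iff₀ hN]
    have h1c : 0 < 1 + c := by linarith
    have := (lt_div_iff₀ h1c).mp ha2
    nlinarith
  have hpos : 0 < 4 * ((p:ℝ) + a + 1) * (α + 1) := by positivity
  have hb' : -((n:ℝ) + 2) * (c - α) ≤ b * (4 * ((p:ℝ) + a + 1) * (α + 1)) :=
    (div_le_iff₀ hpos).mp hb
  have hd : 0 < b + 1 + α * b := by
    nlinarith [mul_pos hn2 hα0, mul_pos hpa1 hα0]
  have hb1p : 0 < b + 1 := by linarith
  have h1M : 1 + M₁ = (1 + α) * (b + 1) / (b + 1 + α * b) := by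
    rw [hM₁]; field_simp; ring
  have h1Mpos : 0 < 1 + M₁ := by
    rw [h1M]; positivity
  have key : ((n:ℝ) + 2) * (M₁ - c) / (1 + M₁) + 4 * M₂ =
      (-((n:ℝ) + 2) * (c - α) - (1 + α) * b * (((n:ℝ) + 2) * c + 2 * (p:ℝ) + 4 * a + 8)) /
        ((1 + α) * (b + 1)) := by
    rw [hM₁, hM₂]
    have hd' : b + 1 + α * b ≠ 0 := ne_of_gt hd
    have h1 : 1 + α / (b + 1 + α * b) ≠ 0 := by
      rw [hM₁] at h1Mpos; exact ne_of_gt h1Mpos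
    field_simp
    ring
  rw [key]
  apply div_nonpos_of_nonpos_of_nonneg
  · have hbr : ((n:ℝ) + 2) * c + 2 * (p:ℝ) + 4 * a + 8 = 4 * ((p:ℝ) + a + 1) := by linarith
    have h2 : (1 + α) * b * (((n:ℝ) + 2) * c + 2 * (p:ℝ) + 4 * a + 8) =
        (1 + α) * b * (4 * ((p:ℝ) + a + 1)) := by rw [hbr]
    nlinarith [hb', h2]
  · positivity
end

section
/- For p/2 + a + 1 > 0 and η, ‖θ‖ > 0, the integral ∫₀¹ exp(-ηλ‖θ‖²/(2(1-λ))) (ηλ/(1-λ))^{p/2} λ^a (1-λ)^{-a-2} dλ equals η^{-a-1} ∫₀^∞ t^{p/2+a} exp(-t‖θ‖²/2) dt = η^{-a-1} ‖θ‖^{-2(p/2+a+1)} 2^{p/2+a+1} Γ(p/2+a+1). -/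
open Real Filter MeasureTheory

/-!
Substituting `t = η λ / (1 - λ)`, so that `dt = η / (1 - λ)² dλ` and
`t ^ a = η ^ a λ ^ a (1 - λ) ^ (-a)`, turns the integrand into
`η ^ (-a - 1) t ^ (p/2 + a) exp (-t ‖θ‖² / 2) dt` on `(0, ∞)`; what remains is Euler's Gamma
integral at rate `‖θ‖² / 2`.
-/

section OddsRatio

variable {η : ℝ}

lemma image_mul_div_one_sub_Ioo (hη : 0 < η) :
    (fun l : ℝ => η * l / (1 - l)) '' Set.Ioo 0 1 = Set.Ioi 0 := by
  ext t
  constructor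
  · rintro ⟨l, ⟨hl0, hl1⟩, rfl⟩
    exact div_pos (by positivity) (sub_pos.2 hl1)
  · intro (ht : 0 < t)
    refine ⟨t / (t + η), ⟨by positivity, (div_lt_one (by positivity)).2 (by linarith)⟩, ?_⟩
    field_simp
    simp [hη.ne']

lemma injOn_mul_div_one_sub_Ioo (hη : 0 < η) :
    Set.InjOn (fun l : ℝ => η * l / (1 - l)) (Set.Ioo 0 1) := by
  intro l hl m hm h
  have h1l : 1 - l ≠ 0 := (sub_pos.2 hl.2).ne'
  have h1m : 1 - m ≠ 0 := (sub_pos.2 hm.2).ne'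
  rw [div_eq_div_iff h1l h1m] at h
  nlinarith

lemma hasDerivAt_mul_div_one_sub {l : ℝ} (hl : l ≠ 1) :
    HasDerivAt (fun l : ℝ => η * l / (1 - l)) (η / (1 - l) ^ 2) l := by
  have h1l : 1 - l ≠ 0 := sub_ne_zero.2 hl.symm
  refine (((hasDerivAt_id' l).const_mul η).fun_div ((hasDerivAt_id' l).const_sub 1)
    h1l).congr_deriv ?_
  ring

theorem integral_Ioi_eq_integral_Ioo_mul_div_one_sub {E : Type*} [NormedAddCommGroup E]
    [NormedSpace ℝ E] (hη : 0 < η) (g : ℝ → E) :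
    ∫ t in Set.Ioi 0, g t = ∫ l in Set.Ioo 0 1, (η / (1 - l) ^ 2) • g (η * l / (1 - l)) := by
  rw [← image_mul_div_one_sub_Ioo hη, integral_image_eq_integral_abs_deriv_smul measurableSet_Ioo
    (fun l hl => (hasDerivAt_mul_div_one_sub hl.2.ne).hasDerivWithinAt)
    (injOn_mul_div_one_sub_Ioo hη)]
  refine setIntegral_congr_fun measurableSet_Ioo fun l _ => ?_
  rw [abs_of_nonneg (by positivity)]

lemma rpow_neg_sub_one_mul_mul_rpow_mul_div_one_sub (a : ℝ) (hη : 0 < η) {l : ℝ}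
    (hl0 : 0 < l) (hl1 : l < 1) :
    η ^ (-a - 1) * (η / (1 - l) ^ 2) * (η * l / (1 - l)) ^ a = l ^ a * (1 - l) ^ (-a - 2) := by
  have h1l : 0 < 1 - l := sub_pos.2 hl1
  rw [Real.div_rpow (by positivity) h1l.le, Real.mul_rpow hη.le hl0.le,
    Real.rpow_sub_one hη.ne', Real.rpow_sub h1l, Real.rpow_two, Real.rpow_neg hη.le,
    Real.rpow_neg h1l.le]
  have : 0 < η ^ a := Real.rpow_pos_of_pos hη a
  have : 0 < (1 - l) ^ a := Real.rpow_pos_of_pos h1l a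
  field_simp

end OddsRatio

theorem integral_Ioi_rpow_mul_exp_neg_mul_sq_div_two {c N : ℝ} (hc : 0 < c + 1) (hN : 0 < N) :
    ∫ t in Set.Ioi (0:ℝ), t ^ c * Real.exp (-t * N ^ 2 / 2) =
      N ^ (-2 * (c + 1)) * 2 ^ (c + 1) * Real.Gamma (c + 1) := by
  have hGamma := integral_rpow_mul_exp_neg_mul_Ioi hc (by positivity : 0 < N ^ 2 / 2)
  rw [add_sub_cancel_right] at hGamma
  have hrate : (1 / (N ^ 2 / 2)) ^ (c + 1) = N ^ (-2 * (c + 1)) * 2 ^ (c + 1) := by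
    rw [one_div_div, Real.div_rpow zero_le_two (by positivity), ← Real.rpow_natCast,
      ← Real.rpow_mul hN.le, neg_mul, Real.rpow_neg hN.le, div_eq_inv_mul]
    norm_num
  rw [← hrate, ← hGamma]
  congr 1 with t
  ring_nf

theorem stmt_18_general (p : ℕ) (a : ℝ) (ha : 0 < (p:ℝ)/2 + a + 1)
    (η : ℝ) (hη : 0 < η) (θ : EuclideanSpace ℝ (Fin p)) (hθ : 0 < ‖θ‖) :
    (∫ l in (0:ℝ)..1, Real.exp (-η * l * ‖θ‖^2 / (2 * (1 - l))) *
        (η * l / (1 - l)) ^ ((p:ℝ)/2) * l ^ a * (1 - l) ^ (-a - 2)) =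
      η ^ (-a - 1) * ∫ t in Set.Ioi (0:ℝ), t ^ ((p:ℝ)/2 + a) * Real.exp (-t * ‖θ‖^2 / 2) ∧
    (∫ t in Set.Ioi (0:ℝ), t ^ ((p:ℝ)/2 + a) * Real.exp (-t * ‖θ‖^2 / 2)) =
      ‖θ‖ ^ (-2 * ((p:ℝ)/2 + a + 1)) * 2 ^ ((p:ℝ)/2 + a + 1) *
        Real.Gamma ((p:ℝ)/2 + a + 1) := by
  refine ⟨?_, integral_Ioi_rpow_mul_exp_neg_mul_sq_div_two ha hθ⟩
  rw [integral_Ioi_eq_integral_Ioo_mul_div_one_sub hη, ← integral_const_mul,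
    intervalIntegral.integral_of_le zero_le_one, integral_Ioc_eq_integral_Ioo]
  refine setIntegral_congr_fun measurableSet_Ioo fun l ⟨hl0, hl1⟩ => ?_
  have ht : 0 < η * l / (1 - l) := div_pos (by positivity) (sub_pos.2 hl1)
  rw [smul_eq_mul, Real.rpow_add ht, mul_assoc _ (l ^ a),
    ← rpow_neg_sub_one_mul_mul_rpow_mul_div_one_sub a hη hl0 hl1]
  have hexp : -η * l * ‖θ‖ ^ 2 / (2 * (1 - l)) = -(η * l / (1 - l)) * ‖θ‖ ^ 2 / 2 := by
    field_simp
  rw [hexp]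
  ring

theorem stmt_18 (p : ℕ) (hp : 3 ≤ p) (a : ℝ) (ha : 0 < (p:ℝ)/2 + a + 1)
    (η : ℝ) (hη : 0 < η) (θ : EuclideanSpace ℝ (Fin p)) (hθ : 0 < ‖θ‖) :
    (∫ l in (0:ℝ)..1, Real.exp (-η * l * ‖θ‖^2 / (2 * (1 - l))) *
        (η * l / (1 - l)) ^ ((p:ℝ)/2) * l ^ a * (1 - l) ^ (-a - 2)) =
      η ^ (-a - 1) * ∫ t in Set.Ioi (0:ℝ), t ^ ((p:ℝ)/2 + a) * Real.exp (-t * ‖θ‖^2 / 2) ∧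
    (∫ t in Set.Ioi (0:ℝ), t ^ ((p:ℝ)/2 + a) * Real.exp (-t * ‖θ‖^2 / 2)) =
      ‖θ‖ ^ (-2 * ((p:ℝ)/2 + a + 1)) * 2 ^ ((p:ℝ)/2 + a + 1) *
        Real.Gamma ((p:ℝ)/2 + a + 1) :=
  stmt_18_general p a ha η hη θ hθ
end

section
/- Let p ≥ 3, n ≥ 2 be integers and e > -n/4 - 3/2. Define g(a) = (2p+2n+4e+4)a² + a(2p²+2pn+12p+7n+4(p+3)e+10) + 4p² + (7/2)pn + 6(p+2)e + 7n + 13p + 10. Then g(-2) < 0 and g(-1) > 0; in particular g has a root a* with -2 < a* < -1. -/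
open Real Filter MeasureTheory

theorem stmt_19 (p n : ℕ) (hp : 3 ≤ p) (hn : 2 ≤ n) (e : ℝ)
    (he : -(n:ℝ)/4 - 3/2 < e) (g : ℝ → ℝ)
    (hg : ∀ a : ℝ, g a = (2*(p:ℝ) + 2*(n:ℝ) + 4*e + 4) * a^2 +
        a * (2*(p:ℝ)^2 + 2*(p:ℝ)*(n:ℝ) + 12*(p:ℝ) + 7*(n:ℝ) + 4*((p:ℝ)+3)*e + 10) +
        4*(p:ℝ)^2 + (7/2)*(p:ℝ)*(n:ℝ) + 6*((p:ℝ)+2)*e + 7*(n:ℝ) + 13*(p:ℝ) + 10) :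
    g (-2) < 0 ∧ 0 < g (-1) ∧ ∃ a : ℝ, g a = 0 ∧ -2 < a ∧ a < -1 := by
  have hp' : (3:ℝ) ≤ (p:ℝ) := by exact_mod_cast hp
  have hn' : (2:ℝ) ≤ (n:ℝ) := by exact_mod_cast hn
  have h2 : g (-2) < 0 := by
    rw [hg]
    nlinarith [mul_pos (sub_pos.mpr (by linarith : (2:ℝ) < (p:ℝ)))
      (by linarith : (0:ℝ) < e + (n:ℝ)/4 + 3/2)]
  have h1 : 0 < g (-1) := by
    rw [hg]
    nlinarith [mul_pos (by linarith : (0:ℝ) < (p:ℝ) + 2)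
      (by linarith : (0:ℝ) < e + (n:ℝ)/4 + 3/2), sq_nonneg ((p:ℝ))]
  refine ⟨h2, h1, ?_⟩
  have hgeq : g = fun a : ℝ => (2*(p:ℝ) + 2*(n:ℝ) + 4*e + 4) * a^2 +
        a * (2*(p:ℝ)^2 + 2*(p:ℝ)*(n:ℝ) + 12*(p:ℝ) + 7*(n:ℝ) + 4*((p:ℝ)+3)*e + 10) +
        4*(p:ℝ)^2 + (7/2)*(p:ℝ)*(n:ℝ) + 6*((p:ℝ)+2)*e + 7*(n:ℝ) + 13*(p:ℝ) + 10 :=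
    funext hg
  have hc : ContinuousOn g (Set.Icc (-2 : ℝ) (-1)) := by
    rw [hgeq]; fun_prop
  have := intermediate_value_Ioo (by norm_num : (-2:ℝ) ≤ -1) hc
  have h0 : (0:ℝ) ∈ g '' Set.Ioo (-2:ℝ) (-1) := this ⟨h2, h1⟩
  obtain ⟨a, ⟨ha1, ha2⟩, ha0⟩ := h0
  exact ⟨a, ha0, ha1, ha2⟩
end
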